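/- Let R be a Noetherian ring, I ⊆ R an ideal, and S a module-finite R-algebra. If every finite system of polynomial equations over R admits an Artin bound with respect to (R,I) that is bounded above by a linear function of n, then every finite system of polynomial equations over S admits an Artin bound with respect to (S,IS) that is bounded above by a linear function of n. -/

import Mathlib

open MvPolynomial

/-!
Choose `R`-module generators `s` of `S` and, `R` being Noetherian, finitely many generators `k`
of the module of relations `ker (R^m → S)`. Substituting `X j = ∑ p, s p * Y (j, p)` writes each
`g i` as `∑ p, s p * G i p (Y)` with `G i p` over `R`, so `y` gives a solution over `S` iff every
`G i y` is a relation, i.e. iff `(y, z)` solves the `R`-system `G i p (Y) = ∑ t, Z (i, t) * k t p`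
for some `z`. Since `(I S)^n = I^n S`, a solution of `g` modulo `(I S)^(β n)` lifts to a solution
of the `R`-system modulo `I^(β n)`; an exact solution `I^n`-close to it projects back to an exact
solution of `g` that is `(I S)^n`-close, so a linear bound for the `R`-system serves for `g`.
-/

/-- `β` is an Artin bound for the system `f` with respect to `(R, I)`: every approximate
solution modulo `I ^ β n` is congruent modulo `I ^ n` to an exact solution. -/
def IsArtinBound {R : Type*} [CommRing R] (I : Ideal R) {N r : ℕ}
    (f : Fin r → MvPolynomial (Fin N) R) (β : ℕ → ℕ) : Prop :=
  ∀ n : ℕ, ∀ a : Fin N → R, (∀ i, eval a (f i) ∈ I ^ β n) →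
    ∃ b : Fin N → R, (∀ i, eval b (f i) = 0) ∧ ∀ j, a j - b j ∈ I ^ n

section ArtinBound

variable {R : Type*} [CommRing R] (I : Ideal R) {σ ι : Type*}

/-- `IsArtinBound` for systems with arbitrary types of variables and equations. -/
def IsArtinBound' (f : ι → MvPolynomial σ R) (β : ℕ → ℕ) : Prop :=
  ∀ n : ℕ, ∀ a : σ → R, (∀ i, eval a (f i) ∈ I ^ β n) →
    ∃ b : σ → R, (∀ i, eval b (f i) = 0) ∧ ∀ j, a j - b j ∈ I ^ n

def HasLinearArtinBound (f : ι → MvPolynomial σ R) : Prop :=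
  ∃ (β : ℕ → ℕ) (c e : ℕ), IsArtinBound' I f β ∧ ∀ n, β n ≤ c * n + e

variable {I}

theorem IsArtinBound'.of_rename_equiv {τ κ : Type*} {f : ι → MvPolynomial σ R} {β : ℕ → ℕ}
    (eσ : σ ≃ τ) (eι : ι ≃ κ) (h : IsArtinBound' I (fun k ↦ rename eσ (f (eι.symm k))) β) :
    IsArtinBound' I f β := by
  intro n a ha
  obtain ⟨b, hb, hab⟩ := h n (a ∘ eσ.symm) fun k ↦ by
    simpa [eval_rename, Function.comp_def] using ha (eι.symm k)
  refine ⟨b ∘ eσ, fun i ↦ ?_, fun j ↦ by simpa using hab (eσ j)⟩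
  simpa [eval_rename] using hb (eι i)

theorem hasLinearArtinBound_of_forall_fin
    (hR : ∀ (N r : ℕ) (f : Fin r → MvPolynomial (Fin N) R),
      ∃ (β : ℕ → ℕ) (c e : ℕ), IsArtinBound I f β ∧ ∀ n, β n ≤ c * n + e)
    [Finite σ] [Finite ι] (f : ι → MvPolynomial σ R) : HasLinearArtinBound I f := by
  obtain ⟨β, c, e, hβ, hlin⟩ :=
    hR _ _ fun k ↦ rename (Finite.equivFin σ) (f ((Finite.equivFin ι).symm k))
  exact ⟨β, c, e, IsArtinBound'.of_rename_equiv _ _ hβ, hlin⟩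

end ArtinBound

section DescendedSystem

variable {R : Type*} [CommRing R] {σ ι κ τ : Type*} [Fintype τ]

/-- The solutions `(y, z)` of this system are those with `G i y = ∑ t, z (i, t) • k t` for
all `i`; when `k` spans the relations among module generators of `S`, this says that `y` is
(the coordinate vector of) a solution over `S`. -/
noncomputable def descendedSystem (G : ι → κ → MvPolynomial (σ × κ) R) (k : τ → κ → R) :
    ι × κ → MvPolynomial ((σ × κ) ⊕ (ι × τ)) R :=
  fun ip ↦ rename Sum.inl (G ip.1 ip.2) - ∑ t, X (Sum.inr (ip.1, t)) * C (k t ip.2)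

theorem eval_descendedSystem (G : ι → κ → MvPolynomial (σ × κ) R) (k : τ → κ → R)
    (y : σ × κ → R) (z : ι × τ → R) (i : ι) (p : κ) :
    eval (Sum.elim y z) (descendedSystem G k (i, p)) = eval y (G i p) - ∑ t, z (i, t) * k t p := by
  simp [descendedSystem, eval_rename]

end DescendedSystem

section Descent

variable {R S : Type*} [CommRing R] [CommRing S] [Algebra R S] {κ : Type*} [Fintype κ]
  {s : κ → S}

local notation "π" => Fintype.linearCombination R s

theorem Ideal.mem_map_iff_exists_linearCombination (hs : Submodule.span R (Set.range s) = ⊤)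
    (J : Ideal R) {x : S} :
    x ∈ J.map (algebraMap R S) ↔ ∃ u : κ → R, (∀ p, u p ∈ J) ∧ π u = x := by
  constructor
  · intro hx
    rw [← Submodule.restrictScalars_mem R, ← Ideal.smul_top_eq_map, ← hs] at hx
    obtain ⟨u, hu, rfl⟩ := (Submodule.mem_ideal_smul_span_iff_exists_sum J s x).mp hx
    exact ⟨u, hu, by simp [Fintype.linearCombination_apply, Finsupp.sum_fintype]⟩
  · rintro ⟨u, hu, rfl⟩
    rw [Fintype.linearCombination_apply]
    exact Ideal.sum_mem _ fun p _ ↦ by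
      rw [Algebra.smul_def]; exact Ideal.mul_mem_right _ _ (Ideal.mem_map_of_mem _ (hu p))

theorem MvPolynomial.exists_eq_sum_C_mul_map (hs : Submodule.span R (Set.range s) = ⊤)
    {σ : Type*} (h : MvPolynomial σ S) :
    ∃ G : κ → MvPolynomial σ R, h = ∑ p, C (s p) * map (algebraMap R S) (G p) := by
  induction h using MvPolynomial.induction_on' with
  | monomial d x =>
    obtain ⟨c, rfl⟩ :=
      (Submodule.mem_span_range_iff_exists_fun R).mp (hs ▸ Submodule.mem_top (x := x))
    refine ⟨fun p ↦ monomial d (c p), ?_⟩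
    simp only [map_monomial, C_mul_monomial, ← map_sum, Algebra.smul_def, mul_comm]
  | add h₁ h₂ ih₁ ih₂ =>
    obtain ⟨G₁, rfl⟩ := ih₁
    obtain ⟨G₂, rfl⟩ := ih₂
    exact ⟨G₁ + G₂, by simp only [Pi.add_apply, map_add, mul_add, Finset.sum_add_distrib]⟩

theorem MvPolynomial.eval_sum_C_mul_map {σ : Type*} (G : κ → MvPolynomial σ R) (y : σ → R) :
    eval (algebraMap R S ∘ y) (∑ p, C (s p) * map (algebraMap R S) (G p)) =
      π fun p ↦ eval y (G p) := by
  simp [Fintype.linearCombination_apply, eval_map, ← eval₂_comp, Algebra.smul_def, mul_comm]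

theorem MvPolynomial.exists_eval_linearCombination_eq (hs : Submodule.span R (Set.range s) = ⊤)
    {σ : Type*} (g : MvPolynomial σ S) :
    ∃ G : κ → MvPolynomial (σ × κ) R, ∀ y : σ × κ → R,
      eval (fun j ↦ π (Function.curry y j)) g = π fun p ↦ eval y (G p) := by
  obtain ⟨G, hG⟩ := exists_eq_sum_C_mul_map hs (bind₁ (fun j ↦ ∑ p, C (s p) * X (j, p)) g)
  refine ⟨G, fun y ↦ ?_⟩
  rw [← eval_sum_C_mul_map, ← hG, eval, eval, eval₂Hom_bind₁]
  simp [Fintype.linearCombination_apply, Algebra.smul_def, mul_comm]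

variable {σ ι τ : Type*} [Fintype τ]
  {g : ι → MvPolynomial σ S} {G : ι → κ → MvPolynomial (σ × κ) R} {k : τ → κ → R}

theorem exists_eval_descendedSystem_mem (hs : Submodule.span R (Set.range s) = ⊤)
    (hk : Submodule.span R (Set.range k) = LinearMap.ker π)
    (hG : ∀ i y, eval (fun j ↦ π (Function.curry y j)) (g i) = π fun p ↦ eval y (G i p))
    (J : Ideal R) (y : σ × κ → R)
    (hy : ∀ i, eval (fun j ↦ π (Function.curry y j)) (g i) ∈ J.map (algebraMap R S)) :
    ∃ z : ι × τ → R, ∀ ip, eval (Sum.elim y z) (descendedSystem G k ip) ∈ J := by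
  have (i : ι) : ∃ zi : τ → R, ∃ u : κ → R, (∀ p, u p ∈ J) ∧
      ∑ t, zi t • k t = (fun p ↦ eval y (G i p)) - u := by
    obtain ⟨u, hu, hπu⟩ := (Ideal.mem_map_iff_exists_linearCombination hs J).mp (hy i)
    have hker : (fun p ↦ eval y (G i p)) - u ∈ LinearMap.ker π := by
      rw [LinearMap.mem_ker, map_sub, hπu, hG, sub_self]
    obtain ⟨zi, hzi⟩ := (Submodule.mem_span_range_iff_exists_fun R).mp (hk ▸ hker)
    exact ⟨zi, u, hu, hzi⟩
  choose z u hu hz using this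
  refine ⟨fun it ↦ z it.1 it.2, fun ⟨i, p⟩ ↦ ?_⟩
  have hzp := congrFun (hz i) p
  simp only [Finset.sum_apply, Pi.smul_apply, smul_eq_mul, Pi.sub_apply] at hzp
  rw [eval_descendedSystem, hzp, sub_sub_cancel]
  exact hu i p

theorem eval_eq_zero_of_eval_descendedSystem_eq_zero
    (hk : Submodule.span R (Set.range k) = LinearMap.ker π)
    (hG : ∀ i y, eval (fun j ↦ π (Function.curry y j)) (g i) = π fun p ↦ eval y (G i p))
    {y : σ × κ → R} {z : ι × τ → R} (h : ∀ ip, eval (Sum.elim y z) (descendedSystem G k ip) = 0)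
    (i : ι) : eval (fun j ↦ π (Function.curry y j)) (g i) = 0 := by
  have hGy : (fun p ↦ eval y (G i p)) = ∑ t, z (i, t) • k t := by
    ext p
    simpa [eval_descendedSystem, sub_eq_zero] using h (i, p)
  rw [hG, ← LinearMap.mem_ker, ← hk, hGy]
  exact Submodule.sum_mem _ fun t _ ↦ Submodule.smul_mem _ _ (Submodule.subset_span ⟨t, rfl⟩)

theorem IsArtinBound'.of_descendedSystem {I : Ideal R} {β : ℕ → ℕ}
    (hs : Submodule.span R (Set.range s) = ⊤)
    (hk : Submodule.span R (Set.range k) = LinearMap.ker π)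
    (hG : ∀ i y, eval (fun j ↦ π (Function.curry y j)) (g i) = π fun p ↦ eval y (G i p))
    (hβ : IsArtinBound' I (descendedSystem G k) β) :
    IsArtinBound' (I.map (algebraMap R S)) g β := by
  intro n a ha
  have hπ := (span_range_eq_top_iff_surjective_fintypeLinearCombination R s).mp hs
  choose c hc using fun j ↦ hπ (a j)
  obtain rfl : (fun j ↦ π (Function.curry (fun v : σ × κ ↦ c v.1 v.2) j)) = a := funext hc
  obtain ⟨z, hz⟩ := exists_eval_descendedSystem_mem hs hk hG (I ^ β n) _
    (by simpa only [Ideal.map_pow] using ha)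
  obtain ⟨w, hw, hcw⟩ := hβ n _ hz
  refine ⟨fun j ↦ π (Function.curry (w ∘ Sum.inl) j),
    eval_eq_zero_of_eval_descendedSystem_eq_zero (z := w ∘ Sum.inr) hk hG
      (by simpa only [Sum.elim_comp_inl_inr] using hw), fun j ↦ ?_⟩
  rw [← map_sub, ← Ideal.map_pow, Ideal.mem_map_iff_exists_linearCombination hs]
  exact ⟨_, fun p ↦ hcw (Sum.inl (j, p)), rfl⟩

theorem HasLinearArtinBound.of_descendedSystem {I : Ideal R}
    (hs : Submodule.span R (Set.range s) = ⊤)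
    (hk : Submodule.span R (Set.range k) = LinearMap.ker π)
    (hG : ∀ i y, eval (fun j ↦ π (Function.curry y j)) (g i) = π fun p ↦ eval y (G i p))
    (h : HasLinearArtinBound I (descendedSystem G k)) :
    HasLinearArtinBound (I.map (algebraMap R S)) g :=
  let ⟨β, c, e, hβ, hlin⟩ := h
  ⟨β, c, e, hβ.of_descendedSystem hs hk hG, hlin⟩

end Descent

/-- **Lemma (LAP ascends along module-finite extensions).** Let `R` be Noetherian, `I ⊆ R` an
ideal and `S` a module-finite `R`-algebra.  If every finite system of polynomial equations over
`R` admits an Artin bound with respect to `(R, I)` bounded above by a linear function of `n`,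
then every finite system of polynomial equations over `S` admits an Artin bound with respect to
`(S, IS)` bounded above by a linear function of `n`. -/
theorem lap_of_moduleFinite
    (R : Type*) [CommRing R] [IsNoetherianRing R] (I : Ideal R)
    (S : Type*) [CommRing S] [Algebra R S] [Module.Finite R S]
    (hR : ∀ (N r : ℕ) (f : Fin r → MvPolynomial (Fin N) R),
      ∃ (β : ℕ → ℕ) (c e : ℕ), IsArtinBound I f β ∧ ∀ n, β n ≤ c * n + e) :
    ∀ (N r : ℕ) (g : Fin r → MvPolynomial (Fin N) S),
      ∃ (β : ℕ → ℕ) (c e : ℕ),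
        IsArtinBound (I.map (algebraMap R S)) g β ∧ ∀ n, β n ≤ c * n + e := by
  intro N r g
  obtain ⟨m, s, hs⟩ := Module.Finite.exists_fin (R := R) (M := S)
  obtain ⟨q, k, hk⟩ := Submodule.fg_iff_exists_fin_generating_family.mp
    (IsNoetherian.noetherian (LinearMap.ker (Fintype.linearCombination R s)))
  choose G hG using fun i ↦ MvPolynomial.exists_eval_linearCombination_eq hs (g i)
  exact (hasLinearArtinBound_of_forall_fin hR (descendedSystem G k)).of_descendedSystem hs hk hG
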